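/- Let α ∈ (0,1), 0 < a < T, and suppose (v, M) is a tube solution to the conformable fractional initial value problem u^(α)(t) = g(t,u(t)), u(a) = u_a, where g is continuous. Suppose u ∈ C^(α)([a,T]) satisfies u^(α)(t) + a^(-α) u(t) = g(t, ũ(t)) + a^(-α) ũ(t) with u(a) = u_a, where ũ is the radial truncation of u into the tube. Then |u(t) - v(t)| ≤ M(t) for all t ∈ [a,T], i.e., u lies in the tube T(v,M). -/

import Mathlib

open Filter Real Set

/-- The conformable fractional derivative of `f` of order `α` at `t`. -/
def HasConformableDerivAt (α : ℝ) (f : ℝ → ℝ) (t L : ℝ) : Prop :=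
  Tendsto (fun ε : ℝ => (f (t + ε * t ^ (1 - α)) - f t) / ε)
    (nhdsWithin 0 {(0 : ℝ)}ᶜ) (nhds L)

open Topology

/-! Let `w = |u - v| - M`, which is `≤ 0` at `a`. Where `w > 0` we have `u ≠ v`, so `w` is
differentiable there, with derivative `(sign (u - v) * (u' - v') - M') * t ^ (α - 1)`. The ODE
splits `sign (u - v) * (u' - v')` into the tube term at the truncated point
`ũ = v + M * sign (u - v)`, bounded by `M'` since `|ũ - v| = M`, and the damping term
`a ^ (-α) * sign (u - v) * (ũ - u) = a ^ (-α) * (M - |u - v|) < 0`. Hence `w` is nonincreasing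
wherever it is positive, so it can never become positive. -/

theorem HasConformableDerivAt.hasDerivAt {α : ℝ} {f : ℝ → ℝ} {t L : ℝ} (ht : 0 < t)
    (hf : HasConformableDerivAt α f t L) : HasDerivAt f (L * t ^ (α - 1)) t := by
  have hc : t ^ (1 - α) ≠ 0 := (rpow_pos_of_pos ht _).ne'
  have hscale : Tendsto (fun h : ℝ => h / t ^ (1 - α)) (𝓝[≠] 0) (𝓝[≠] 0) := by
    refine tendsto_nhdsWithin_of_tendsto_nhds_of_eventually_within _ ?_
      (eventually_nhdsWithin_of_forall fun h h0 => div_ne_zero h0 hc)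
    simpa using ((continuous_id.div_const (t ^ (1 - α))).tendsto 0).mono_left nhdsWithin_le_nhds
  rw [hasDerivAt_iff_tendsto_slope_zero]
  convert (hf.comp hscale).div_const (t ^ (1 - α)) using 2 with h
  · simp only [Function.comp_apply, div_mul_cancel₀ _ hc, smul_eq_mul]
    field_simp
  · rw [← neg_sub 1 α, rpow_neg ht.le, div_eq_mul_inv]

theorem nonpos_of_hasDerivAt_nonpos_where_pos {w : ℝ → ℝ} {a b : ℝ}
    (hw : ContinuousOn w (Icc a b)) (ha : w a ≤ 0)
    (hd : ∀ x ∈ Ioo a b, 0 < w x → ∃ d ≤ 0, HasDerivAt w d x) :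
    ∀ x ∈ Icc a b, w x ≤ 0 := by
  by_contra! ⟨t, ht, hwt⟩
  set S := Icc a t ∩ w ⁻¹' Iic 0
  have hS : IsClosed S :=
    (hw.mono (Icc_subset_Icc_right ht.2)).preimage_isClosed_of_isClosed isClosed_Icc isClosed_Iic
  have hSbdd : BddAbove S := bddAbove_Icc.mono inter_subset_left
  have hsS : sSup S ∈ S := hS.csSup_mem ⟨a, ⟨le_rfl, ht.1⟩, ha⟩ hSbdd
  set s := sSup S
  have hst : s < t := hsS.1.2.lt_of_ne fun h => hwt.not_ge (h ▸ hsS.2)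
  have hpos : ∀ x ∈ Ioc s t, 0 < w x := fun x hx => by
    by_contra! hx0
    exact hx.1.not_ge (le_csSup hSbdd ⟨⟨hsS.1.1.trans hx.1.le, hx.2⟩, hx0⟩)
  have hsub : Icc s t ⊆ Icc a b := Icc_subset_Icc hsS.1.1 ht.2
  have hderiv : ∀ x ∈ Ioo s t, ∃ d ≤ 0, HasDerivAt w d x := fun x hx =>
    hd x ⟨hsS.1.1.trans_lt hx.1, hx.2.trans_le ht.2⟩ (hpos x (Ioo_subset_Ioc_self hx))
  have hanti : AntitoneOn w (Icc s t) := by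
    refine antitoneOn_of_deriv_nonpos (convex_Icc s t) (hw.mono hsub) ?_ ?_ <;>
      rw [interior_Icc] <;> intro x hx <;> obtain ⟨d, hd0, hdx⟩ := hderiv x hx
    · exact hdx.differentiableAt.differentiableWithinAt
    · rwa [hdx.deriv]
  exact hwt.not_ge ((hanti (left_mem_Icc.2 hst.le) (right_mem_Icc.2 hst.le) hst.le).trans hsS.2)

-- Also true at `0`, where `0 / |0| = 0`.
theorem div_abs_eq_sign (x : ℝ) : x / |x| = SignType.sign x := by
  rcases lt_trichotomy x 0 with h | rfl | h
  · simp [abs_of_neg h, h, h.ne]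
  · simp
  · simp [abs_of_pos h, h, h.ne']

theorem abs_sign_of_ne_zero {x : ℝ} (hx : x ≠ 0) : |(SignType.sign x : ℝ)| = 1 := by
  rcases hx.lt_or_gt with h | h <;> simp [h]

theorem sign_mul_sub_le_of_tube {g : ℝ → ℝ} {y v M v' M' : ℝ} (hM : 0 ≤ M) (hyv : y ≠ v)
    (tube1 : ∀ z, |z - v| = M → (z - v) * (g z - v') ≤ M * M')
    (tube2 : M = 0 → v' = g v ∧ M' = 0) :
    SignType.sign (y - v) * (g (v + M * SignType.sign (y - v)) - v') ≤ M' := by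
  rcases hM.eq_or_lt with hM0 | hM0
  · obtain ⟨hv', hM'⟩ := tube2 hM0.symm
    simp [← hM0, hv', hM']
  · have h := tube1 (v + M * SignType.sign (y - v)) <| by
      rw [add_sub_cancel_left, abs_mul, abs_sign_of_ne_zero (sub_ne_zero.2 hyv), abs_of_pos hM0,
        mul_one]
    rw [add_sub_cancel_left, mul_assoc] at h
    exact le_of_mul_le_mul_left h hM0

theorem sign_mul_sub_le_of_truncated_ode {g : ℝ → ℝ} {y v M du dv dM k : ℝ} (hk : 0 ≤ k)
    (hyv : M ≤ |y - v|)
    (hflux : SignType.sign (y - v) * (g (v + M * SignType.sign (y - v)) - dv) ≤ dM)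
    (hode : du + k * y = g (v + M * SignType.sign (y - v)) + k * (v + M * SignType.sign (y - v))) :
    SignType.sign (y - v) * (du - dv) ≤ dM := by
  set σ : ℝ := (SignType.sign (y - v) : ℝ)
  have hsplit : σ * (du - dv) = σ * (g (v + M * σ) - dv) + k * (σ * σ) * (M - |y - v|) := by
    linear_combination σ * hode + k * σ * abs_mul_sign (y - v)
  have hdamp : k * (σ * σ) * (M - |y - v|) ≤ 0 :=
    mul_nonpos_of_nonneg_of_nonpos (mul_nonneg hk (mul_self_nonneg σ)) (sub_nonpos.2 hyv)
  linarith

theorem stmt16_general (α a T ua : ℝ) (ha : 0 < a)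
    (g : ℝ → ℝ → ℝ)
    (v M v' M' : ℝ → ℝ)
    (hv : ∀ t ∈ Set.Icc a T, HasConformableDerivAt α v t (v' t))
    (hM : ∀ t ∈ Set.Icc a T, HasConformableDerivAt α M t (M' t))
    (hMnn : ∀ t ∈ Set.Icc a T, 0 ≤ M t)
    (tube1 : ∀ t ∈ Set.Icc a T, ∀ y : ℝ, |y - v t| = M t →
      (y - v t) * (g t y - v' t) ≤ M t * M' t)
    (tube2 : ∀ t ∈ Set.Icc a T, M t = 0 → v' t = g t (v t) ∧ M' t = 0)
    (tube3 : |ua - v a| ≤ M a)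
    (u u' ut : ℝ → ℝ)
    (hut : ut = fun t =>
      if M t < |u t - v t| then v t + M t * (u t - v t) / |u t - v t| else u t)
    (hu : ∀ t ∈ Set.Icc a T, HasConformableDerivAt α u t (u' t))
    (hode : ∀ t ∈ Set.Icc a T, u' t + a ^ (-α) * u t = g t (ut t) + a ^ (-α) * ut t)
    (hua : u a = ua) :
    ∀ t ∈ Set.Icc a T, |u t - v t| ≤ M t := by
  have hpos : ∀ t ∈ Icc a T, 0 < t := fun t ht => ha.trans_le ht.1
  have hu := fun t ht => (hu t ht).hasDerivAt (hpos t ht)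
  have hv := fun t ht => (hv t ht).hasDerivAt (hpos t ht)
  have hM := fun t ht => (hM t ht).hasDerivAt (hpos t ht)
  suffices ∀ t ∈ Icc a T, |u t - v t| - M t ≤ 0 from fun t ht => sub_nonpos.1 (this t ht)
  refine nonpos_of_hasDerivAt_nonpos_where_pos (fun t ht => ?_) (by rwa [hua, sub_nonpos])
    (fun t ht hout => ?_)
  · exact (((hu t ht).continuousAt.sub (hv t ht).continuousAt).abs.sub
      (hM t ht).continuousAt).continuousWithinAt
  have ht := Ioo_subset_Icc_self ht
  have hout : M t < |u t - v t| := sub_pos.1 hout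
  have hne : u t - v t ≠ 0 := abs_pos.1 ((hMnn t ht).trans_lt hout)
  have hode := hode t ht
  simp only [hut, if_pos hout, mul_div_assoc, div_abs_eq_sign] at hode
  have hslope := sign_mul_sub_le_of_truncated_ode (rpow_nonneg ha.le _) hout.le
    (sign_mul_sub_le_of_tube (hMnn t ht) (sub_ne_zero.1 hne) (tube1 t ht) (tube2 t ht)) hode
  refine ⟨(SignType.sign (u t - v t) * (u' t - v' t) - M' t) * t ^ (α - 1),
    mul_nonpos_of_nonpos_of_nonneg (sub_nonpos.2 hslope) (rpow_nonneg (hpos t ht).le _), ?_⟩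
  refine (((hasDerivAt_abs hne).comp t ((hu t ht).sub (hv t ht))).sub (hM t ht)).congr_deriv ?_
  ring

theorem stmt16 (α a T ua : ℝ) (hα : α ∈ Set.Ioo (0:ℝ) 1) (ha : 0 < a) (haT : a < T)
    (g : ℝ → ℝ → ℝ) (hg : Continuous fun p : ℝ × ℝ => g p.1 p.2)
    (v M v' M' : ℝ → ℝ)
    (hv : ∀ t ∈ Set.Icc a T, HasConformableDerivAt α v t (v' t))
    (hv' : ContinuousOn v' (Set.Icc a T))
    (hM : ∀ t ∈ Set.Icc a T, HasConformableDerivAt α M t (M' t))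
    (hM' : ContinuousOn M' (Set.Icc a T))
    (hMnn : ∀ t ∈ Set.Icc a T, 0 ≤ M t)
    (tube1 : ∀ t ∈ Set.Icc a T, ∀ y : ℝ, |y - v t| = M t →
      (y - v t) * (g t y - v' t) ≤ M t * M' t)
    (tube2 : ∀ t ∈ Set.Icc a T, M t = 0 → v' t = g t (v t) ∧ M' t = 0)
    (tube3 : |ua - v a| ≤ M a)
    (u u' ut : ℝ → ℝ)
    (hut : ut = fun t =>
      if M t < |u t - v t| then v t + M t * (u t - v t) / |u t - v t| else u t)
    (hu : ∀ t ∈ Set.Icc a T, HasConformableDerivAt α u t (u' t))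
    (hu' : ContinuousOn u' (Set.Icc a T))
    (hode : ∀ t ∈ Set.Icc a T, u' t + a ^ (-α) * u t = g t (ut t) + a ^ (-α) * ut t)
    (hua : u a = ua) :
    ∀ t ∈ Set.Icc a T, |u t - v t| ≤ M t :=
  stmt16_general α a T ua ha g v M v' M' hv hM hMnn tube1 tube2 tube3 u u' ut hut hu hode hua
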